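/- If in a DAG every vertex in the conditioning set S is an ancestor of A ∪ B, then d-separation of A and B by S in the full DAG holds if and only if it holds in the ancestral subgraph generated by A ∪ B ∪ S. -/

import Mathlib

/-- Skeleton (undirected) adjacency of a directed graph. -/
def Skel {V : Type*} (E : V → V → Prop) (a b : V) : Prop := E a b ∨ E b a

/-- Directed reachability: `Reaches E a b` iff there is a directed path from `a` to `b`. -/
def Reaches {V : Type*} (E : V → V → Prop) : V → V → Prop := Relation.ReflTransGen E

/-- A directed graph is acyclic if no edge can be completed to a directed cycle. -/
def IsAcyclicD {V : Type*} (E : V → V → Prop) : Prop := ∀ a b : V, E a b → ¬ Reaches E b a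

/-- `(a, b, c)` is an immorality (v-structure): `a → b ← c` with `a, c` non-adjacent. -/
def Immorality {V : Type*} (E : V → V → Prop) (a b c : V) : Prop :=
  a ≠ c ∧ E a b ∧ E c b ∧ ¬ Skel E a c

/-- `p` is an (undirected) trail from `a` to `b` in the skeleton of `E`. -/
def IsTrail {V : Type*} (E : V → V → Prop) (a b : V) (p : List V) : Prop :=
  p.Chain' (Skel E) ∧ p.head? = some a ∧ p.getLast? = some b ∧ p.Nodup ∧ 2 ≤ p.length

/-- A consecutive triple `x - y - z` on a trail is blocked by `S`:
a collider `x → y ← z` blocks unless `y` has a descendant (possibly itself) in `S`;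
a non-collider blocks iff `y ∈ S`. -/
def BlockedTriple {V : Type*} (E : V → V → Prop) (S : Set V) (x y z : V) : Prop :=
  ((E x y ∧ E z y) ∧ ∀ d ∈ S, ¬ Reaches E y d) ∨ (¬ (E x y ∧ E z y) ∧ y ∈ S)

/-- A trail is blocked by `S` if some consecutive triple on it is blocked. -/
def BlockedTrail {V : Type*} (E : V → V → Prop) (S : Set V) (p : List V) : Prop :=
  ∃ l x y z r, p = l ++ x :: y :: z :: r ∧ BlockedTriple E S x y z

/-- d-separation: every trail between `A` and `B` is blocked by `S`. -/
def DSep {V : Type*} (E : V → V → Prop) (A B S : Set V) : Prop :=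
  ∀ a ∈ A, ∀ b ∈ B, ∀ p : List V, IsTrail E a b p → BlockedTrail E S p

/-- Markov equivalence: the same d-separations among disjoint sets. -/
def MarkovEquiv {V : Type*} (E₁ E₂ : V → V → Prop) : Prop :=
  ∀ A B S : Set V, Disjoint A B → Disjoint A S → Disjoint B S →
    (DSep E₁ A B S ↔ DSep E₂ A B S)

/-- The ancestral closure of `W`: all vertices with a directed path into `W`. -/
def AncSet {V : Type*} (E : V → V → Prop) (W : Set V) : Set V :=
  {v | ∃ w ∈ W, Reaches E v w}

/-- The subgraph induced on a vertex set. -/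
def InducedE {V : Type*} (E : V → V → Prop) (W : Set V) (a b : V) : Prop :=
  E a b ∧ a ∈ W ∧ b ∈ W

/-- Moral graph adjacency: skeleton edges plus marriages of common parents. -/
def Moral {V : Type*} (E : V → V → Prop) (a b : V) : Prop :=
  a ≠ b ∧ (E a b ∨ E b a ∨ ∃ c, E a c ∧ E b c)

/-- `p` is a path from `a` to `b` in the undirected graph `G`. -/
def UPath {V : Type*} (G : V → V → Prop) (a b : V) (p : List V) : Prop :=
  p.Chain' G ∧ p.head? = some a ∧ p.getLast? = some b ∧ p.Nodup

/-- Separation in an undirected graph: every path from `A` to `B` meets `S`. -/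
def USep {V : Type*} (G : V → V → Prop) (A B S : Set V) : Prop :=
  ∀ a ∈ A, ∀ b ∈ B, ∀ p : List V, UPath G a b p → ∃ s ∈ S, s ∈ p

/-!
Let `W` be the ancestral closure of `A ∪ B ∪ S`. A trail lying inside `W` is a trail of the
induced graph, and there a triple is blocked iff it is blocked in the full graph, because a
directed path from a vertex into `S` never leaves the ancestral set `W`. Trails of the induced
graph lie in `W` by construction. A trail that is active in the full graph lies in `W` too:
following it from any vertex in the direction of an out-edge, we reach either an endpoint or a
collider, both of which are in `W` (an active collider is an ancestor of `S`), and `W` is closed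
under taking parents.
-/

section Ancestral

variable {V : Type*} {E : V → V → Prop}

theorem skel_inducedE_iff {W : Set V} {a b : V} :
    Skel (InducedE E W) a b ↔ Skel E a b ∧ a ∈ W ∧ b ∈ W := by
  unfold Skel InducedE
  tauto

def IsAncestral (E : V → V → Prop) (W : Set V) : Prop :=
  ∀ ⦃u v⦄, E u v → v ∈ W → u ∈ W

theorem isAncestral_ancSet (X : Set V) : IsAncestral E (AncSet E X) := by
  rintro u v huv ⟨w, hw, hvw⟩
  exact ⟨w, hw, .head huv hvw⟩

theorem subset_ancSet (X : Set V) : X ⊆ AncSet E X := fun x hx => ⟨x, hx, .refl⟩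

theorem ancSet_mono {X Y : Set V} (h : X ⊆ Y) : AncSet E X ⊆ AncSet E Y :=
  fun _ ⟨w, hw, hvw⟩ => ⟨w, h hw, hvw⟩

theorem IsAncestral.reaches_inducedE {W : Set V} (hW : IsAncestral E W) {y d : V}
    (hd : d ∈ W) (h : Reaches E y d) : Reaches (InducedE E W) y d := by
  suffices y ∈ W ∧ Reaches (InducedE E W) y d from this.2
  induction h using Relation.ReflTransGen.head_induction_on with
  | refl => exact ⟨hd, .refl⟩
  | head hyc _ ih => exact ⟨hW hyc ih.1, .head ⟨hyc, hW hyc ih.1, ih.1⟩ ih.2⟩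

theorem reaches_of_reaches_inducedE {W : Set V} {y d : V} (h : Reaches (InducedE E W) y d) :
    Reaches E y d :=
  Relation.ReflTransGen.mono (fun _ _ h => h.1) y d h

theorem blockedTriple_inducedE_iff {W S : Set V} (hW : IsAncestral E W) (hS : S ⊆ W)
    {x y z : V} (hx : x ∈ W) (hy : y ∈ W) (hz : z ∈ W) :
    BlockedTriple (InducedE E W) S x y z ↔ BlockedTriple E S x y z := by
  have hcol : (InducedE E W x y ∧ InducedE E W z y) ↔ (E x y ∧ E z y) := by
    simp only [InducedE, hx, hy, hz, and_true]
  have hreach : (∀ d ∈ S, ¬ Reaches (InducedE E W) y d) ↔ ∀ d ∈ S, ¬ Reaches E y d :=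
    forall₂_congr fun _ hd =>
      not_congr ⟨reaches_of_reaches_inducedE, hW.reaches_inducedE (hS hd)⟩
  simp only [BlockedTriple, hcol, hreach]

theorem blockedTrail_iff_exists_infix {S : Set V} {p : List V} :
    BlockedTrail E S p ↔ ∃ x y z, [x, y, z] <:+: p ∧ BlockedTriple E S x y z := by
  constructor
  · rintro ⟨l, x, y, z, r, rfl, h⟩
    exact ⟨x, y, z, ⟨l, r, by simp⟩, h⟩
  · rintro ⟨x, y, z, ⟨l, r, rfl⟩, h⟩
    exact ⟨l, x, y, z, r, by simp, h⟩

theorem blockedTrail_inducedE_iff {W S : Set V} (hW : IsAncestral E W) (hS : S ⊆ W)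
    {p : List V} (hp : ∀ v ∈ p, v ∈ W) :
    BlockedTrail (InducedE E W) S p ↔ BlockedTrail E S p := by
  simp only [blockedTrail_iff_exists_infix]
  refine exists₃_congr fun x y z => and_congr_right fun hxyz => ?_
  have hmem : ∀ v ∈ [x, y, z], v ∈ W := fun v hv => hp v (hxyz.subset hv)
  exact blockedTriple_inducedE_iff hW hS (hmem x (by simp)) (hmem y (by simp)) (hmem z (by simp))

theorem isTrail_inducedE_iff {W : Set V} {a b : V} {p : List V} (hp : ∀ v ∈ p, v ∈ W) :
    IsTrail (InducedE E W) a b p ↔ IsTrail E a b p := by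
  have hchain : p.IsChain (Skel (InducedE E W)) ↔ p.IsChain (Skel E) :=
    List.IsChain.iff_of_mem_imp fun u v hu hv => by
      simp only [skel_inducedE_iff, hp u hu, hp v hv, and_true]
  exact and_congr_left' hchain

theorem mem_of_isChain_skel_inducedE {W : Set V} :
    ∀ {p : List V}, p.IsChain (Skel (InducedE E W)) → 2 ≤ p.length → ∀ v ∈ p, v ∈ W
  | [x, y], h, _ => by
    have := skel_inducedE_iff.1 (List.isChain_pair.1 h)
    simp only [List.mem_cons, List.not_mem_nil, or_false, forall_eq_or_imp, forall_eq]
    exact this.2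
  | x :: y :: z :: r, h, _ => by
    obtain ⟨hxy, hrest⟩ := List.isChain_cons_cons.1 h
    rintro v (_ | ⟨_, hv⟩)
    · exact (skel_inducedE_iff.1 hxy).2.1
    · exact mem_of_isChain_skel_inducedE hrest (by simp) v hv

theorem IsTrail.mem_of_inducedE {W : Set V} {a b : V} {p : List V}
    (hp : IsTrail (InducedE E W) a b p) : ∀ v ∈ p, v ∈ W :=
  mem_of_isChain_skel_inducedE hp.1 hp.2.2.2.2

end Ancestral

section ActiveTrail

variable {V : Type*} {E : V → V → Prop} {W : Set V}

def CollidersIn (E : V → V → Prop) (W : Set V) (p : List V) : Prop :=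
  ∀ ⦃x y z⦄, [x, y, z] <:+: p → E x y → E z y → y ∈ W

theorem CollidersIn.of_infix {p q : List V} (h : CollidersIn E W q) (hpq : p <:+: q) :
    CollidersIn E W p :=
  fun _ _ _ hxyz => h (hxyz.trans hpq)

theorem CollidersIn.mono {W' : Set V} {p : List V} (h : CollidersIn E W p) (hW : W ⊆ W') :
    CollidersIn E W' p :=
  fun _ _ _ hxyz hxy hzy => hW (h hxyz hxy hzy)

theorem CollidersIn.reverse {p : List V} (h : CollidersIn E W p) : CollidersIn E W p.reverse :=
  fun _ _ _ hxyz hxy hzy => h (List.reverse_infix.1 hxyz) hzy hxy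

theorem collidersIn_ancSet_of_not_blockedTrail {S : Set V} {p : List V}
    (h : ¬ BlockedTrail E S p) : CollidersIn E (AncSet E S) p := by
  intro x y z hxyz hxy hzy
  by_contra hy
  exact h (blockedTrail_iff_exists_infix.2
    ⟨x, y, z, hxyz, .inl ⟨⟨hxy, hzy⟩, fun d hd hyd => hy ⟨d, hd, hyd⟩⟩⟩)

theorem IsAncestral.mem_of_forward_edge_cons (hW : IsAncestral E W) {b : V} (hb : b ∈ W) :
    ∀ {u v : V} {r : List V}, (u :: v :: r).IsChain (Skel E) → CollidersIn E W (u :: v :: r) →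
      (u :: v :: r).getLast? = some b → E u v → u ∈ W
  | _, _, [], _, _, hlast, huv => hW huv (by simp_all)
  | u, v, w :: r, hch, hcol, hlast, huv => by
    obtain ⟨-, hch⟩ := List.isChain_cons_cons.1 hch
    have hv : v ∈ W := by
      rcases (List.isChain_cons_cons.1 hch).1 with hvw | hwv
      · exact hW.mem_of_forward_edge_cons hb hch (hcol.of_infix (List.suffix_cons _ _).isInfix)
          (by simpa using hlast) hvw
      · exact hcol ⟨[], r, rfl⟩ huv hwv
    exact hW huv hv

theorem IsAncestral.mem_of_forward_edge (hW : IsAncestral E W) {p : List V} {b u v : V}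
    (hch : p.IsChain (Skel E)) (hcol : CollidersIn E W p) (hlast : p.getLast? = some b)
    (hb : b ∈ W) (hvu : [v, u] <:+: p) (he : E v u) : v ∈ W := by
  obtain ⟨l, r, rfl⟩ := hvu
  have hsuf : v :: u :: r <:+ l ++ [v, u] ++ r := ⟨l, by simp⟩
  refine hW.mem_of_forward_edge_cons hb (hch.suffix hsuf) (hcol.of_infix hsuf.isInfix) ?_ he
  rwa [List.append_assoc, List.getLast?_append_of_ne_nil _ (by simp)] at hlast

theorem IsAncestral.mem_of_backward_edge (hW : IsAncestral E W) {p : List V} {a u v : V}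
    (hch : p.IsChain (Skel E)) (hcol : CollidersIn E W p) (hhead : p.head? = some a)
    (ha : a ∈ W) (huv : [u, v] <:+: p) (he : E v u) : v ∈ W :=
  hW.mem_of_forward_edge (List.isChain_reverse.2 (hch.imp fun _ _ h => h.symm)) hcol.reverse
    (by rw [List.getLast?_reverse, hhead]) ha (List.reverse_infix.2 huv) he

theorem IsAncestral.mem_of_collidersIn (hW : IsAncestral E W) {p : List V} {a b : V}
    (hch : p.IsChain (Skel E)) (hcol : CollidersIn E W p) (hhead : p.head? = some a)
    (ha : a ∈ W) (hlast : p.getLast? = some b) (hb : b ∈ W) : ∀ v ∈ p, v ∈ W := by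
  intro v hv
  obtain ⟨l, r, rfl⟩ := List.append_of_mem hv
  rcases r with _ | ⟨w, r⟩
  · simp_all
  rcases List.eq_nil_or_concat l with rfl | ⟨l, u, rfl⟩
  · simp_all
  have huvw : [u, v, w] <:+: l.concat u ++ v :: w :: r := ⟨l, r, by simp⟩
  have hskel : ∀ {x y}, [x, y] <:+: [u, v, w] → Skel E x y := fun h =>
    List.isChain_pair.1 (hch.infix (h.trans huvw))
  rcases hskel (x := u) (y := v) ⟨[], [w], rfl⟩ with huv | hvu
  · rcases hskel (x := v) (y := w) ⟨[u], [], rfl⟩ with hvw | hwv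
    · exact hW.mem_of_forward_edge hch hcol hlast hb (List.IsInfix.trans ⟨[u], [], rfl⟩ huvw) hvw
    · exact hcol huvw huv hwv
  · exact hW.mem_of_backward_edge hch hcol hhead ha (List.IsInfix.trans ⟨[], [w], rfl⟩ huvw) hvu

end ActiveTrail

theorem dsep_iff_dsep_ancestral_general
    {V : Type*} (E : V → V → Prop) (A B S : Set V) :
    DSep E A B S ↔ DSep (InducedE E (AncSet E (A ∪ B ∪ S))) A B S := by
  set W := AncSet E (A ∪ B ∪ S)
  have hW : IsAncestral E W := isAncestral_ancSet _
  have hSW : S ⊆ W := Set.subset_union_right.trans (subset_ancSet _)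
  constructor
  · intro hsep a ha b hb p hp
    have hpW := hp.mem_of_inducedE
    rw [isTrail_inducedE_iff hpW] at hp
    exact (blockedTrail_inducedE_iff hW hSW hpW).2 (hsep a ha b hb p hp)
  · intro hsep a ha b hb p hp
    by_contra hactive
    have hcol : CollidersIn E W p :=
      (collidersIn_ancSet_of_not_blockedTrail hactive).mono (ancSet_mono Set.subset_union_right)
    have hpW := hW.mem_of_collidersIn hp.1 hcol hp.2.1 (subset_ancSet _ (.inl (.inl ha)))
      hp.2.2.1 (subset_ancSet _ (.inl (.inr hb)))
    rw [← isTrail_inducedE_iff hpW] at hp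
    exact hactive ((blockedTrail_inducedE_iff hW hSW hpW).1 (hsep a ha b hb p hp))

/-- If every vertex of `S` is an ancestor of `A ∪ B`, then d-separation of `A` and `B`
by `S` in the full DAG holds iff it holds in the ancestral subgraph generated by
`A ∪ B ∪ S`. -/
theorem dsep_iff_dsep_ancestral
    {V : Type*} [Fintype V] [DecidableEq V]
    (E : V → V → Prop) (hE : IsAcyclicD E) (A B S : Set V)
    (hAB : Disjoint A B) (hAS : Disjoint A S) (hBS : Disjoint B S)
    (hanc : ∀ s ∈ S, s ∈ AncSet E (A ∪ B)) :
    DSep E A B S ↔ DSep (InducedE E (AncSet E (A ∪ B ∪ S))) A B S :=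
  dsep_iff_dsep_ancestral_general E A B S
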